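/- For every positive integer n, B*_{2n+1} = (-1)^n/4 + (1/√3)·sin((2n+1)π/3). -/

import Mathlib

open Finset Real

/-- The modified Bernoulli numbers of Zagier (as real numbers). -/
noncomputable def zagierBstar (n : ℕ) : ℝ :=
  ∑ r ∈ Finset.range (n + 1), ((n + r).choose (2 * r) : ℝ) * (bernoulli r : ℚ) / (n + r)

/-! Let `L` be the linear functional `X ^ n ↦ B_n` on polynomials. Since
`∑_{k<n} (n choose k) B_k = [n = 1]` and `(-1) ^ n B_n = B_n + [n = 1]`, both `p ↦ L (p(X + 1))` and
`p ↦ L (p(-X))` equal `p ↦ L p + p'(0)`. The rescaled Chebyshev polynomial `C_m`, with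
`C_m(2 cos θ) = 2 cos (m θ)`, has `C_m(X + 2) = ∑_r (2m / (m + r)) (m + r choose 2r) X ^ r`, so
`L (C_m(X + 2)) = 2m B*_m`. Shifting the argument of `C_m(X + 2)` down by one four times and
reflecting back with `C_m(-X) = -C_m(X)` (for odd `m`) gives
`2 L (C_m(X + 2)) = C_m'(-1) + C_m'(0) + C_m'(1)`, and `C_m'(2 cos θ) sin θ = m sin (m θ)` evaluates
these at `θ = 2π/3, π/2, π/3`. -/

open _root_.Polynomial hiding bernoulli bernoulli_one sum_bernoulli

theorem bernoulli'_eq_bernoulli_add_ite (n : ℕ) :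
    bernoulli' n = bernoulli n + if n = 1 then 1 else 0 := by
  rcases eq_or_ne n 1 with rfl | hn
  · norm_num [bernoulli_one]
  · simp [hn, bernoulli_eq_bernoulli'_of_ne_one hn]

theorem derivative_eval_neg_of_comp_neg_X {R : Type*} [CommRing R] {g : R[X]}
    (hg : g.comp (-X) = -g) (a : R) : g.derivative.eval (-a) = g.derivative.eval a := by
  have h := congrArg (fun p => (derivative p).eval a) hg
  simpa [derivative_comp] using h

section Umbral

variable {K : Type*} [Field K]

variable (K) in
noncomputable def bernoulliUmbral : K[X] →ₗ[K] K :=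
  lsum fun n => (bernoulli n : K) • LinearMap.id

theorem bernoulliUmbral_apply (p : K[X]) :
    bernoulliUmbral K p = p.sum fun n a => (bernoulli n : K) * a := rfl

theorem bernoulliUmbral_monomial (n : ℕ) (a : K) :
    bernoulliUmbral K (monomial n a) = bernoulli n * a :=
  sum_monomial_index a _ (by simp)

variable [CharZero K]

theorem bernoulliUmbral_X_add_one_pow (n : ℕ) :
    bernoulliUmbral K ((X + 1) ^ n) = bernoulli' n := by
  have hdeg : ((X + 1 : K[X]) ^ n).natDegree < n + 1 := by
    rw [← C_1, natDegree_pow, natDegree_X_add_C, mul_one]; omega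
  have hsum : ∑ k ∈ range n, (bernoulli k : K) * n.choose k = (if n = 1 then 1 else 0 : ℚ) := by
    rw [← sum_bernoulli n]
    push_cast
    simp_rw [mul_comm]
  rw [bernoulliUmbral_apply, sum_over_range' _ (by simp) (n + 1) hdeg]
  simp only [coeff_X_add_one_pow, sum_range_succ, hsum, Nat.choose_self, Nat.cast_one, mul_one,
    bernoulli'_eq_bernoulli_add_ite]
  split_ifs <;> push_cast <;> ring

theorem bernoulliUmbral_neg_X_pow (n : ℕ) :
    bernoulliUmbral K ((-X) ^ n) = bernoulli' n := by
  rw [neg_pow, ← C_1, ← C_neg, ← C_pow, X_pow_eq_monomial, C_mul_monomial, mul_one,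
    bernoulliUmbral_monomial, bernoulli'_eq_bernoulli]
  push_cast
  ring

theorem bernoulliUmbral_comp {q : K[X]} (hq : ∀ n, bernoulliUmbral K (q ^ n) = bernoulli' n)
    (p : K[X]) : bernoulliUmbral K (p.comp q) = bernoulliUmbral K p + p.coeff 1 := by
  induction p using Polynomial.induction_on' with
  | add p₁ p₂ h₁ h₂ => simp only [add_comp, map_add, coeff_add, h₁, h₂]; ring
  | monomial n a =>
    rw [monomial_comp, ← smul_eq_C_mul, map_smul, hq, bernoulliUmbral_monomial,
      bernoulli'_eq_bernoulli_add_ite, coeff_monomial]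
    split_ifs <;> push_cast <;> simp only [add_zero, smul_eq_mul] <;> ring

theorem bernoulliUmbral_taylor_one (p : K[X]) :
    bernoulliUmbral K (taylor 1 p) = bernoulliUmbral K p + p.coeff 1 := by
  rw [taylor_apply, C_1]
  exact bernoulliUmbral_comp bernoulliUmbral_X_add_one_pow p

theorem bernoulliUmbral_taylor_add_one (a : K) (p : K[X]) :
    bernoulliUmbral K (taylor (a + 1) p) =
      bernoulliUmbral K (taylor a p) + p.derivative.eval a := by
  rw [add_comm, ← taylor_taylor, bernoulliUmbral_taylor_one, taylor_coeff_one]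

theorem bernoulliUmbral_taylor_neg_of_comp_neg_X {g : K[X]} (hg : g.comp (-X) = -g) (a : K) :
    bernoulliUmbral K (taylor (-a) g) = -bernoulliUmbral K (taylor a g) - g.derivative.eval a := by
  have hX : (X + C a).comp (-X) = (-X).comp (X + C (-a)) := by
    simp only [add_comp, X_comp, C_comp, map_neg, neg_comp, neg_add_rev, neg_neg]; ring
  have h : (taylor a g).comp (-X) = -taylor (-a) g := by
    rw [taylor_apply, taylor_apply, comp_assoc, hX, ← comp_assoc, hg, neg_comp]
  have := bernoulliUmbral_comp bernoulliUmbral_neg_X_pow (taylor a g)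
  rw [h, map_neg, taylor_coeff_one] at this
  linear_combination -this

theorem two_mul_bernoulliUmbral_taylor_two_of_comp_neg_X {g : K[X]} (hg : g.comp (-X) = -g) :
    2 * bernoulliUmbral K (taylor 2 g) =
      g.derivative.eval (-1) + g.derivative.eval 0 + g.derivative.eval 1 := by
  have h₁ := bernoulliUmbral_taylor_add_one (-2) g
  have h₂ := bernoulliUmbral_taylor_add_one (-1) g
  have h₃ := bernoulliUmbral_taylor_add_one 0 g
  have h₄ := bernoulliUmbral_taylor_add_one 1 g
  have h₅ := bernoulliUmbral_taylor_neg_of_comp_neg_X hg 2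
  have h₆ := derivative_eval_neg_of_comp_neg_X hg 2
  norm_num at h₁ h₂ h₃ h₄
  linear_combination h₁ + h₂ + h₃ + h₄ + h₅ + h₆

end Umbral

-- For `n = m + r`, `k = 2r` this is the recurrence `c (m+2) (r+1) + c m (r+1) = c (m+1) r +
-- 2 c (m+1) (r+1)` of `c m r = (m + r).choose (2r) + (m + r - 1).choose (2r)`, which
-- `C_{m+2} = X C_{m+1} - C_m` imposes on the coefficients of `C_m(X + 2)`.
theorem Nat.choose_add_choose_recurrence (n k : ℕ) :
    (n + 3).choose (k + 2) + (n + 2).choose (k + 2) + ((n + 1).choose (k + 2) + n.choose (k + 2)) =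
      (n + 1).choose k + n.choose k + 2 * ((n + 2).choose (k + 2) + (n + 1).choose (k + 2)) := by
  have h₁ : (n + 3).choose (k + 2) = (n + 2).choose (k + 1) + (n + 2).choose (k + 2) :=
    Nat.choose_succ_succ' _ _
  have h₂ : (n + 2).choose (k + 1) = (n + 1).choose k + (n + 1).choose (k + 1) :=
    Nat.choose_succ_succ' _ _
  have h₃ : (n + 2).choose (k + 2) = (n + 1).choose (k + 1) + (n + 1).choose (k + 2) :=
    Nat.choose_succ_succ' _ _
  have h₄ : (n + 1).choose (k + 1) = n.choose k + n.choose (k + 1) := Nat.choose_succ_succ' _ _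
  have h₅ : (n + 1).choose (k + 2) = n.choose (k + 1) + n.choose (k + 2) :=
    Nat.choose_succ_succ' _ _
  omega

theorem Nat.choose_add_choose_sub_one_mul (m r : ℕ) :
    ((m + r).choose (2 * r) + (m + r - 1).choose (2 * r)) * (m + r) =
      2 * m * (m + r).choose (2 * r) := by
  cases hn : m + r with
  | zero => simp [show m = 0 by omega]
  | succ n =>
    rw [Nat.add_sub_cancel, add_mul, Nat.choose_mul_succ_eq, ← mul_add]
    rcases le_or_gt (2 * r) (n + 1) with hr | hr
    · rw [show n + 1 + (n + 1 - 2 * r) = 2 * m by omega]; ring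
    · simp [Nat.choose_eq_zero_of_lt hr]

namespace Polynomial.Chebyshev

variable (R : Type*) [CommRing R]

-- At `m = r = 0` the truncated `m + r - 1` is `0`, giving the constant term `2` of `C_0`.
theorem coeff_taylor_two_C (m r : ℕ) :
    (taylor 2 (C R m)).coeff r = ((m + r).choose (2 * r) + (m + r - 1).choose (2 * r) : ℕ) := by
  rcases r with _ | r
  · simp [taylor_coeff_zero, C_eval_two]
  induction m using Nat.twoStepInduction generalizing r with
  | zero =>
    rw [Nat.choose_eq_zero_of_lt (by omega), Nat.choose_eq_zero_of_lt (by omega)]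
    simp [taylor_apply]
  | one =>
    rcases r with _ | r
    · simp [taylor_apply]
    · rw [Nat.choose_eq_zero_of_lt (by omega), Nat.choose_eq_zero_of_lt (by omega)]
      simp [taylor_apply, coeff_X]
  | more m ih ih' =>
    have hrec : taylor (2 : R) (C R ↑(m + 2)) =
        (X + 2) * taylor 2 (C R ↑(m + 1)) - taylor 2 (C R m) := by
      push_cast
      rw [C_add_two, map_sub, taylor_mul, taylor_X, Polynomial.C_ofNat]
    have hr : (taylor (2 : R) (C R ↑(m + 1))).coeff r =
        ((m + 1 + r).choose (2 * r) + (m + 1 + r - 1).choose (2 * r) : ℕ) := by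
      rcases r with _ | r
      · simp [taylor_coeff_zero, C_eval_two]
      · exact ih' r
    have key := congrArg (Nat.cast : ℕ → R) (Nat.choose_add_choose_recurrence (m + r) (2 * r))
    rw [hrec, add_mul, coeff_sub, coeff_add, coeff_X_mul, hr, coeff_ofNat_mul, ih', ih]
    simp only [show m + 2 + (r + 1) = m + r + 3 by omega, show m + 1 + (r + 1) = m + r + 2 by omega,
      show m + (r + 1) = m + r + 1 by omega, show m + 1 + r = m + r + 1 by omega,
      show 2 * (r + 1) = 2 * r + 2 by omega, Nat.add_sub_cancel]
    push_cast at key ⊢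
    linear_combination -key

theorem coeff_taylor_two_C_mul (m r : ℕ) :
    (taylor (2 : R) (C R m)).coeff r * (m + r) = 2 * m * (m + r).choose (2 * r) := by
  have h := congrArg (Nat.cast : ℕ → R) (Nat.choose_add_choose_sub_one_mul m r)
  rw [coeff_taylor_two_C, ← Nat.cast_add, ← Nat.cast_mul, h]
  push_cast
  ring

theorem C_comp_neg_X (n : ℕ) : (C R n).comp (-X) = (-1) ^ n * C R n := by
  induction n using Nat.twoStepInduction with
  | zero => simp
  | one => simp
  | more n ih ih' =>
    have h := C_add_two R n
    push_cast at ih ih' ⊢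
    rw [h, sub_comp, mul_comp, X_comp, ih, ih']
    ring

theorem C_derivative_eq_S [Invertible (2 : R)] (n : ℤ) :
    derivative (C R n) = n * S R (n - 1) := by
  rw [C_eq_two_mul_T_comp_half_mul_X, S_eq_U_comp_half_mul_X, derivative_mul, derivative_comp,
    T_derivative_eq_U]
  have h2 : (2 : R[X]) * Polynomial.C ⅟2 = 1 := by
    rw [← map_ofNat Polynomial.C 2, ← Polynomial.C_mul, mul_invOf_self, Polynomial.C_1]
  simp only [derivative_ofNat, zero_mul, zero_add, derivative_mul, Polynomial.derivative_C,
    derivative_X, mul_one, mul_comp, intCast_comp]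
  linear_combination (↑n * (U R (n - 1)).comp (Polynomial.C ⅟2 * X)) * h2

theorem C_derivative_eval_two_mul_cos_mul_sin (n : ℤ) (θ : ℝ) :
    (derivative (C ℝ n)).eval (2 * Real.cos θ) * Real.sin θ = n * Real.sin (n * θ) := by
  rw [C_derivative_eq_S, eval_mul, mul_assoc, S_two_mul_real_cos]
  simp

end Polynomial.Chebyshev

theorem bernoulliUmbral_taylor_two_chebyshevC {m : ℕ} (hm : 0 < m) :
    bernoulliUmbral ℝ (taylor 2 (Chebyshev.C ℝ m)) = 2 * m * zagierBstar m := by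
  have hcoeff (r : ℕ) : (taylor (2 : ℝ) (Chebyshev.C ℝ m)).coeff r =
      2 * m * (m + r).choose (2 * r) / (m + r) := by
    rw [eq_div_iff (by positivity), Chebyshev.coeff_taylor_two_C_mul]
  have hdeg : (taylor (2 : ℝ) (Chebyshev.C ℝ m)).natDegree < m + 1 := by
    rw [Nat.lt_succ_iff, natDegree_le_iff_coeff_eq_zero]
    intro r hr
    rw [hcoeff, Nat.choose_eq_zero_of_lt (by omega)]
    simp
  rw [bernoulliUmbral_apply, sum_over_range' _ (by simp) _ hdeg, zagierBstar, mul_sum]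
  refine sum_congr rfl fun r _ => ?_
  rw [hcoeff]
  ring

open Polynomial.Chebyshev in
theorem zagierBstar_odd_closed_form_general (n : ℕ) :
    zagierBstar (2 * n + 1) =
      (-1 : ℝ) ^ n / 4 + (1 / Real.sqrt 3) * Real.sin ((2 * n + 1) * Real.pi / 3) := by
  set m := 2 * n + 1 with hm
  have hodd : (C ℝ m).comp (-X) = -C ℝ m := by
    rw [C_comp_neg_X, Odd.neg_one_pow ⟨n, rfl⟩, neg_one_mul]
  have hsum := two_mul_bernoulliUmbral_taylor_two_of_comp_neg_X hodd
  rw [bernoulliUmbral_taylor_two_chebyshevC (by omega), derivative_eval_neg_of_comp_neg_X hodd]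
    at hsum
  have h₁ : (derivative (C ℝ m)).eval 1 * (√3 / 2) = m * sin (m * (π / 3)) := by
    simpa using C_derivative_eval_two_mul_cos_mul_sin m (π / 3)
  have h₀ : (derivative (C ℝ m)).eval 0 = m * (-1) ^ n := by
    have h := C_derivative_eval_two_mul_cos_mul_sin m (π / 2)
    rwa [cos_pi_div_two, sin_pi_div_two, mul_zero, mul_one, Int.cast_natCast, hm,
      show ((2 * n + 1 : ℕ) : ℝ) * (π / 2) = n * π + π / 2 by push_cast; ring,
      sin_add_pi_div_two, cos_nat_mul_pi] at h
  rw [show (2 * n + 1 : ℝ) * π / 3 = m * (π / 3) by rw [hm]; push_cast; ring]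
  set s := sin (m * (π / 3))
  have key : (m : ℝ) * (4 * √3 * zagierBstar m) = m * (√3 * (-1) ^ n + 4 * s) := by
    linear_combination √3 * hsum + 4 * h₁ + √3 * h₀
  field_simp
  linear_combination mul_left_cancel₀ (by positivity) key

theorem zagierBstar_odd_closed_form (n : ℕ) (hn : 0 < n) :
    zagierBstar (2 * n + 1) =
      (-1 : ℝ) ^ n / 4 + (1 / Real.sqrt 3) * Real.sin ((2 * n + 1) * Real.pi / 3) :=
  zagierBstar_odd_closed_form_general n
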